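/- arXiv:1804.02962 — 2 statements merged into one kernel-verified Lean document; each statement's English description precedes it below -/
import Mathlib

section
/- Suppose matrices satisfy $A\bar{V}_j = \bar{V}_{j+1}\bar{H}_{j+1,j} + \mathcal{F}_{j+1}\bar{\Delta}_{j+1,j}$, $\bar{Z}_j = \bar{V}_j\bar{G}_j + \Theta^v_j$, $A\bar{Z}_j = \bar{Z}_{j+1}\bar{B}_{j+1,j} + \Theta^z_j$, and the coefficient compatibility relation $\bar{G}_{j+1}\bar{B}_{j+1,j} = \bar{H}_{j+1,j}\bar{G}_j$, where $\bar{G}_j$ and $\bar{G}_{j+1}$ are invertible and $\bar{\Delta}_{j+1,j}$ has a left inverse $\bar{\Delta}^+_{j+1,j}$. Then the gap matrix satisfies $\mathcal{F}_{j+1} = (\Theta^z_j - A\Theta^v_j + \Theta^v_{j+1}\bar{B}_{j+1,j})\,\bar{G}_j^{-1}\,\bar{\Delta}^+_{j+1,j} + E$, where $E\bar{\Delta}_{j+1,j} = 0$; in particular if all matrices are uniquely determined by right multiplication by $\bar{\Delta}_{j+1,j}$ followed by $\bar{\Delta}^+_{j+1,j}$ (i.e. $\mathcal{F}_{j+1}\bar{\Delta}_{j+1,j}\bar{\Delta}^+_{j+1,j}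 = \mathcal{F}_{j+1}$), then $\mathcal{F}_{j+1} = (\Theta^z_j - A\Theta^v_j + \Theta^v_{j+1}\bar{B}_{j+1,j})\,\bar{G}_j^{-1}\,\bar{\Delta}^+_{j+1,j}$. -/
/-!
Substituting `Z = V G + Θv` and `Z' = V' G' + Θv'` into `A Z = Z' B + Θz`, expanding `A V` by the
perturbed Arnoldi relation and `G' B` by `H G`, the `V' H G` terms cancel and leave
`F Δ G = Θz - A Θv + Θv' B`. Inverting `G` gives `F Δ`; the left inverse `Δ⁺` then recovers `F`
up to a matrix annihilated by `Δ`.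
-/

open Matrix

variable {R : Type*} [CommRing R] {l m n p q : Type*}

theorem gap_mul_mul_eq_of_arnoldi [Fintype l] [Fintype m] [Fintype n] [Fintype p]
    {A : Matrix l l R} {V Z Θv Θz : Matrix l m R}
    {V' Z' Θv' : Matrix l n R} {H B : Matrix n m R} {G : Matrix m m R} {G' : Matrix n n R}
    {F : Matrix l p R} {Δ : Matrix p m R}
    (hAV : A * V = V' * H + F * Δ) (hZ : Z = V * G + Θv) (hZ' : Z' = V' * G' + Θv')
    (hAZ : A * Z = Z' * B + Θz) (hGB : G' * B = H * G) :
    F * Δ * G = Θz - A * Θv + Θv' * B := by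
  have h : V' * H * G + F * Δ * G + A * Θv = V' * H * G + Θv' * B + Θz := by
    calc V' * H * G + F * Δ * G + A * Θv = A * Z := by
          rw [hZ, Matrix.mul_add, ← Matrix.mul_assoc, hAV, Matrix.add_mul]
      _ = V' * H * G + Θv' * B + Θz := by
          rw [hAZ, hZ', Matrix.add_mul, Matrix.mul_assoc V', hGB, Matrix.mul_assoc V']
  have h' : F * Δ * G + A * Θv = Θv' * B + Θz :=
    add_left_cancel (by simpa only [add_assoc] using h)
  rw [eq_sub_of_add_eq h']
  abel

theorem exists_eq_mul_add_of_mul_eq [Fintype p] [Fintype q] [DecidableEq q]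
    {X : Matrix l p R} {Δ : Matrix p q R} {Δp : Matrix q p R}
    {Y : Matrix l q R} (hΔp : Δp * Δ = 1) (h : X * Δ = Y) :
    ∃ E : Matrix l p R, X = Y * Δp + E ∧ E * Δ = 0 :=
  ⟨X - Y * Δp, (add_sub_cancel _ _).symm, by
    rw [Matrix.sub_mul, Matrix.mul_assoc, hΔp, Matrix.mul_one, h, sub_self]⟩

theorem stmt_6_general (n j : ℕ) (A : Matrix (Fin n) (Fin n) ℝ)
    (V : Matrix (Fin n) (Fin j) ℝ) (V' : Matrix (Fin n) (Fin (j+1)) ℝ)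
    (Z : Matrix (Fin n) (Fin j) ℝ) (Z' : Matrix (Fin n) (Fin (j+1)) ℝ)
    (H B Δ : Matrix (Fin (j+1)) (Fin j) ℝ)
    (G : Matrix (Fin j) (Fin j) ℝ) (G' : Matrix (Fin (j+1)) (Fin (j+1)) ℝ)
    (Θv : Matrix (Fin n) (Fin j) ℝ) (Θv' : Matrix (Fin n) (Fin (j+1)) ℝ)
    (Θz : Matrix (Fin n) (Fin j) ℝ)
    (F : Matrix (Fin n) (Fin (j+1)) ℝ)
    (Δp : Matrix (Fin j) (Fin (j+1)) ℝ)
    (hAV : A * V = V' * H + F * Δ)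
    (hZ : Z = V * G + Θv)
    (hZ' : Z' = V' * G' + Θv')
    (hAZ : A * Z = Z' * B + Θz)
    (hGB : G' * B = H * G)
    (hGinv : IsUnit G)
    (hΔp : Δp * Δ = 1) :
    (∃ E : Matrix (Fin n) (Fin (j+1)) ℝ,
      F = (Θz - A * Θv + Θv' * B) * G⁻¹ * Δp + E ∧ E * Δ = 0) ∧
    (F * Δ * Δp = F → F = (Θz - A * Θv + Θv' * B) * G⁻¹ * Δp) := by
  have hFΔ : F * Δ = (Θz - A * Θv + Θv' * B) * G⁻¹ := by
    rw [← gap_mul_mul_eq_of_arnoldi hAV hZ hZ' hAZ hGB,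
      mul_nonsing_inv_cancel_right _ _ ((isUnit_iff_isUnit_det G).mp hGinv)]
  refine ⟨exists_eq_mul_add_of_mul_eq hΔp hFΔ, fun hF => ?_⟩
  rw [← hF, hFΔ]

theorem stmt_6 (n j : ℕ) (A : Matrix (Fin n) (Fin n) ℝ)
    (V : Matrix (Fin n) (Fin j) ℝ) (V' : Matrix (Fin n) (Fin (j+1)) ℝ)
    (Z : Matrix (Fin n) (Fin j) ℝ) (Z' : Matrix (Fin n) (Fin (j+1)) ℝ)
    (H B Δ : Matrix (Fin (j+1)) (Fin j) ℝ)
    (G : Matrix (Fin j) (Fin j) ℝ) (G' : Matrix (Fin (j+1)) (Fin (j+1)) ℝ)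
    (Θv : Matrix (Fin n) (Fin j) ℝ) (Θv' : Matrix (Fin n) (Fin (j+1)) ℝ)
    (Θz : Matrix (Fin n) (Fin j) ℝ)
    (F : Matrix (Fin n) (Fin (j+1)) ℝ)
    (Δp : Matrix (Fin j) (Fin (j+1)) ℝ)
    (hAV : A * V = V' * H + F * Δ)
    (hZ : Z = V * G + Θv)
    (hZ' : Z' = V' * G' + Θv')
    (hAZ : A * Z = Z' * B + Θz)
    (hGB : G' * B = H * G)
    (hGinv : IsUnit G) (hG'inv : IsUnit G')
    (hΔp : Δp * Δ = 1)
    (hcols : ∀ (i : Fin n) (k : Fin j), Θv' i (Fin.castSucc k) = Θv i k) :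
    (∃ E : Matrix (Fin n) (Fin (j+1)) ℝ,
      F = (Θz - A * Θv + Θv' * B) * G⁻¹ * Δp + E ∧ E * Δ = 0) ∧
    (F * Δ * Δp = F → F = (Θz - A * Θv + Θv' * B) * G⁻¹ * Δp) :=
  stmt_6_general n j A V V' Z Z' H B Δ G G' Θv Θv' Θz F Δp hAV hZ hZ' hAZ hGB hGinv hΔp
end

section
/- Suppose $\bar{x}_j = \bar{x}_0 + \bar{V}_j y_j - \Theta^p_j y_j + \theta^x_j$ and $A\bar{V}_j = \bar{V}_{j+1}\bar{H}_{j+1,j} + \mathcal{F}_{j+1}\bar{\Delta}_{j+1,j}$, and define the recursive residual $\bar{r}_j = \bar{r}_0 - \bar{V}_{j+1}\bar{H}_{j+1,j} y_j$ where $\bar{r}_0 = b - A\bar{x}_0$. Then the true residual satisfies $b - A\bar{x}_j = \bar{r}_j - \mathcal{F}_{j+1}\bar{\Delta}_{j+1,j} y_j + A\Theta^p_j y_j - A\theta^x_j$. -/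
theorem stmt_18 (n j : ℕ) (A : Matrix (Fin n) (Fin n) ℝ) (b : Fin n → ℝ)
    (x0 xj r0 rj θx : Fin n → ℝ)
    (Vj Θp : Matrix (Fin n) (Fin j) ℝ) (Vj1 F : Matrix (Fin n) (Fin (j+1)) ℝ)
    (H Δ : Matrix (Fin (j+1)) (Fin j) ℝ) (y : Fin j → ℝ)
    (hx : xj = x0 + Vj.mulVec y - Θp.mulVec y + θx)
    (hAV : A * Vj = Vj1 * H + F * Δ)
    (hr0 : r0 = b - A.mulVec x0)
    (hr : rj = r0 - (Vj1 * H).mulVec y) :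
    b - A.mulVec xj =
      rj - (F * Δ).mulVec y + A.mulVec (Θp.mulVec y) - A.mulVec θx := by
  have hAVy : A.mulVec (Vj.mulVec y) = (Vj1 * H).mulVec y + (F * Δ).mulVec y := by
    rw [Matrix.mulVec_mulVec, hAV, Matrix.add_mulVec]
  rw [hx, hr, hr0]
  simp only [Matrix.mulVec_add, Matrix.mulVec_sub, hAVy]
  abel
end
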